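/- Let T be the rooted binary tree with vertex set the finite binary sequences, and let a, b be the automorphisms defined recursively by a = (1, b) and b = (1, a)·ε, where ε swaps the two subtrees at the root and (g,h) acts as g on the left subtree and h on the right subtree. Then a and b have infinite order, and in particular the group G = ⟨a, b⟩ is infinite. -/
import Mathlib


/-!
Vertices of the rooted binary tree are finite binary sequences, modelled as `List Bool`.
An automorphism of the tree is described by a *portrait* `p : List Bool → Bool`, recording
at each vertex whether the two subtrees below it are swapped.
-/

/-- The action on vertices of the tree automorphism with portrait `p`. -/
def act (p : List Bool → Bool) : List Bool → List Bool
  | [] => []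
  | i :: v => (xor (p []) i) :: act (fun w => p (i :: w)) v

theorem act_injective (p : List Bool → Bool) : Function.Injective (act p) := by
  intro u
  induction u generalizing p with
  | nil =>
    intro v h
    cases v with
    | nil => rfl
    | cons j w => simp [act] at h
  | cons i u ih =>
    intro v h
    cases v with
    | nil => simp [act] at h
    | cons j w =>
      simp only [act, List.cons.injEq] at h
      obtain ⟨h1, h2⟩ := h
      have hij : i = j := by cases hp : p [] <;> cases i <;> cases j <;> simp_all
      subst hij
      exact congrArg _ (ih (p := fun w => p (i :: w)) h2)

theorem act_surjective (p : List Bool → Bool) : Function.Surjective (act p) := by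
  intro v
  induction v generalizing p with
  | nil => exact ⟨[], rfl⟩
  | cons j w ih =>
    obtain ⟨u, hu⟩ := ih (p := fun w => p ((xor (p []) j) :: w))
    refine ⟨xor (p []) j :: u, ?_⟩
    simp only [act, hu, List.cons.injEq, and_true]
    cases hp : p [] <;> cases j <;> simp

/-- The tree automorphism with portrait `p`, as a permutation of the vertex set. -/
noncomputable def permOfPortrait (p : List Bool → Bool) : Equiv.Perm (List Bool) :=
  Equiv.ofBijective (act p) ⟨act_injective p, act_surjective p⟩

mutual
  /-- Portrait of the generator `a = (1, b)`. -/
  def pa : List Bool → Bool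
    | [] => false
    | i :: u => if i then pb u else false
  /-- Portrait of the generator `b = (1, a)ε`. -/
  def pb : List Bool → Bool
    | [] => true
    | i :: u => if i then pa u else false
end

/-- The automorphism `a = (1, b)`. -/
noncomputable def aPerm : Equiv.Perm (List Bool) := permOfPortrait pa

/-- The automorphism `b = (1, a)ε`. -/
noncomputable def bPerm : Equiv.Perm (List Bool) := permOfPortrait pb


lemma act_const_false : ∀ v, act (fun _ => false) v = v
  | [] => rfl
  | i :: v => by simp only [act, Bool.false_xor]; exact congrArg _ (act_const_false v)

lemma a_true (v : List Bool) : aPerm (true :: v) = true :: bPerm v := by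
  show act pa (true :: v) = true :: act pb v
  have hp : (fun w => pa (true :: w)) = pb := funext fun w => by simp [pa]
  simp only [act, hp]
  simp [pa]

lemma a_false (v : List Bool) : aPerm (false :: v) = false :: v := by
  show act pa (false :: v) = false :: v
  have hp : (fun w => pa (false :: w)) = (fun _ => false) := funext fun w => by simp [pa]
  simp only [act, hp, act_const_false]
  simp [pa]

lemma b_true (v : List Bool) : bPerm (true :: v) = false :: aPerm v := by
  show act pb (true :: v) = false :: act pa v
  have hp : (fun w => pb (true :: w)) = pa := funext fun w => by simp [pb]
  simp only [act, hp]
  simp [pb]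

lemma b_false (v : List Bool) : bPerm (false :: v) = true :: v := by
  show act pb (false :: v) = true :: v
  have hp : (fun w => pb (false :: w)) = (fun _ => false) := funext fun w => by simp [pb]
  simp only [act, hp, act_const_false]
  simp [pb]

lemma pow_succ_apply (σ : Equiv.Perm (List Bool)) (n : ℕ) (v : List Bool) :
    (σ ^ (n + 1)) v = (σ ^ n) (σ v) := by
  rw [pow_succ]; rfl

lemma apow_true (n : ℕ) (v : List Bool) : (aPerm ^ n) (true :: v) = true :: (bPerm ^ n) v := by
  induction n generalizing v with
  | zero => rfl
  | succ n ih => rw [pow_succ_apply, a_true, ih, pow_succ_apply]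

lemma b_b (i : Bool) (v : List Bool) : bPerm (bPerm (i :: v)) = i :: aPerm v := by
  cases i
  · rw [b_false, b_true]
  · rw [b_true, b_false]

lemma bpow_even (n : ℕ) (v : List Bool) (i : Bool) :
    (bPerm ^ (2 * n)) (i :: v) = i :: (aPerm ^ n) v := by
  induction n generalizing v with
  | zero => rfl
  | succ n ih =>
    have h : 2 * (n + 1) = 2 * n + 1 + 1 := by ring
    rw [h, pow_succ_apply, pow_succ_apply, b_b, ih, pow_succ_apply]

lemma a_pow_eq_one_imp (n : ℕ) (h : aPerm ^ n = 1) : bPerm ^ n = 1 := by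
  apply Equiv.ext
  intro v
  have := apow_true n v
  rw [h] at this
  simpa using this.symm

lemma b_not_finOrder : ¬ IsOfFinOrder bPerm := by
  intro hb
  have hm : 0 < orderOf bPerm := hb.orderOf_pos
  have h1 : bPerm ^ orderOf bPerm = 1 := pow_orderOf_eq_one bPerm
  rcases Nat.even_or_odd (orderOf bPerm) with ⟨n, hn⟩ | ⟨n, hn⟩
  · have hn' : orderOf bPerm = 2 * n := by omega
    have han : aPerm ^ n = 1 := by
      apply Equiv.ext
      intro v
      have := bpow_even n v false
      rw [← hn', h1] at this
      simpa using this.symm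
    have hbn : bPerm ^ n = 1 := a_pow_eq_one_imp n han
    have hdvd : orderOf bPerm ∣ n := orderOf_dvd_of_pow_eq_one hbn
    have hnpos : 0 < n := by omega
    have := Nat.le_of_dvd hnpos hdvd
    omega
  · have h2 : (bPerm ^ (2 * n + 1)) [false] = (bPerm ^ (2 * n)) [true] := by
      rw [pow_succ_apply, b_false]
    have h3 : (bPerm ^ (2 * n)) [true] = [true] := by
      have anil : ∀ m : ℕ, (aPerm ^ m) [] = [] := by
        intro m
        induction m with
        | zero => rfl
        | succ m ih => rw [pow_succ_apply]; exact ih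
      rw [bpow_even n [] true, anil]
    rw [← hn, h1, h3] at h2
    simp at h2

lemma a_not_finOrder : ¬ IsOfFinOrder aPerm := by
  intro ha
  apply b_not_finOrder
  obtain ⟨n, hn, han⟩ := isOfFinOrder_iff_pow_eq_one.mp ha
  exact isOfFinOrder_iff_pow_eq_one.mpr ⟨n, hn, a_pow_eq_one_imp n han⟩

/-- The generators `a = (1,b)` and `b = (1,a)ε` of the basilica group have infinite
order; in particular the group `G = ⟨a, b⟩` they generate is infinite. -/
theorem basilica_generators_infinite_order :
    ¬ IsOfFinOrder aPerm ∧ ¬ IsOfFinOrder bPerm ∧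
      Infinite ↥(Subgroup.closure ({aPerm, bPerm} : Set (Equiv.Perm (List Bool)))) := by
  refine ⟨a_not_finOrder, b_not_finOrder, ?_⟩
  have hmem : aPerm ∈ Subgroup.closure ({aPerm, bPerm} : Set (Equiv.Perm (List Bool))) :=
    Subgroup.subset_closure (by simp)
  have hinj : Function.Injective (fun n : ℕ => aPerm ^ n) :=
    injective_pow_iff_not_isOfFinOrder.mpr a_not_finOrder
  exact Infinite.of_injective
    (fun n : ℕ => (⟨aPerm ^ n, pow_mem hmem n⟩ :
      ↥(Subgroup.closure ({aPerm, bPerm} : Set (Equiv.Perm (List Bool))))))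
    (fun n m h => hinj (by simpa using congrArg Subtype.val h))
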